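/- arXiv:1910.04162 — 5 statements merged into one kernel-verified Lean document; each statement's English description precedes it below -/
import Mathlib

section
/- For any sequence of C(n,2) distinct unordered pairs from {1,...,n} (an RCMSN), the total number of deliveries is at least 2*C(n,2) + 2*C(n,3); equivalently, the capacity is at least 2(n+1)/(3n). -/
/-!
Every packet reaches its own two sensors, which gives `2 * C(n,2)` deliveries. Since the packets
enumerate all pairs, each 3-set `s` of sensors contains exactly three packets; the two that come
before the last one meet it, so through it each reaches the vertex of `s` it misses. A delivery
`(k, x)` with `x ∉ a k` determines the 3-set `insert x (a k)`, so these are `2 * C(n,3)` further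
distinct deliveries.
-/

/-- Packet `a k` can reach sensor `x`: there is an increasing chain of packets
starting at `a k`, consecutive packets intersecting, ending at a packet containing `x`. -/
def canReach {n m : ℕ} (a : Fin m → Finset (Fin n)) (k : Fin m) (x : Fin n) : Prop :=
  ∃ k' : Fin m,
    Relation.ReflTransGen (fun i j : Fin m => i < j ∧ (a i ∩ a j).Nonempty) k k' ∧ x ∈ a k'

open Finset

section PairFamily

variable {ι α : Type*} [Fintype ι] [Fintype α] [DecidableEq α] {r : ℕ} {a : ι → Finset α}

theorem image_univ_eq_powersetCard_of_injective (hinj : Function.Injective a)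
    (hcard : ∀ k, #(a k) = r) (hι : Fintype.card ι = (Fintype.card α).choose r) :
    univ.image a = powersetCard r univ :=
  eq_of_subset_of_card_le
    (image_subset_iff.2 fun k _ => mem_powersetCard.2 ⟨subset_univ _, hcard k⟩)
    (by rw [card_image_of_injective _ hinj, card_powersetCard, card_univ, card_univ, hι])

theorem card_filter_subset_of_injective (hinj : Function.Injective a)
    (hcard : ∀ k, #(a k) = r) (hι : Fintype.card ι = (Fintype.card α).choose r) (s : Finset α) :
    #{k | a k ⊆ s} = (#s).choose r := by
  have hpow : (powersetCard r univ).filter (· ⊆ s) = powersetCard r s := by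
    ext t; simp [and_comm]
  rw [← card_powersetCard, ← hpow, ← image_univ_eq_powersetCard_of_injective hinj hcard hι,
    filter_image, card_image_of_injective _ hinj]

end PairFamily

section Triangle

variable {α : Type*} [DecidableEq α] {s t u : Finset α}

theorem inter_nonempty_of_card_two_of_subset_card_three (hs : #s = 3) (ht : t ⊆ s) (hu : u ⊆ s)
    (ht2 : #t = 2) (hu2 : #u = 2) : (t ∩ u).Nonempty := by
  have := card_le_card (union_subset ht hu)
  have := card_union_add_card_inter t u
  rw [← card_pos]
  omega

theorem mem_of_card_two_of_subset_card_three (hs : #s = 3) (ht : t ⊆ s) (hu : u ⊆ s)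
    (ht2 : #t = 2) (hu2 : #u = 2) (htu : t ≠ u) {x : α} (hx : x ∈ s) (hxt : x ∉ t) : x ∈ u := by
  by_contra hxu
  have herase : #(s.erase x) = 2 := by rw [card_erase_of_mem hx, hs]
  have h1 : t = s.erase x := eq_of_subset_of_card_le (subset_erase.2 ⟨ht, hxt⟩) (by omega)
  have h2 : u = s.erase x := eq_of_subset_of_card_le (subset_erase.2 ⟨hu, hxu⟩) (by omega)
  exact htu (h1.trans h2.symm)

end Triangle

section Reach

variable {n m : ℕ} {a : Fin m → Finset (Fin n)}

theorem canReach_of_mem {k : Fin m} {x : Fin n} (h : x ∈ a k) : canReach a k x :=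
  ⟨k, .refl, h⟩

theorem canReach_of_lt {k j : Fin m} {x : Fin n} (hkj : k < j) (hint : (a k ∩ a j).Nonempty)
    (hx : x ∈ a j) : canReach a k x :=
  ⟨j, .single ⟨hkj, hint⟩, hx⟩

variable (a) in
open Classical in
noncomputable def farDeliveries : Finset (Fin m × Fin n) :=
  {p | canReach a p.1 p.2 ∧ p.2 ∉ a p.1}

variable (a) in
theorem ncard_canReach_eq :
    {p : Fin m × Fin n | canReach a p.1 p.2}.ncard = ∑ k, #(a k) + #(farDeliveries a) := by
  classical
  have hown : #{p : Fin m × Fin n | p.2 ∈ a p.1} = ∑ k, #(a k) := by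
    rw [card_filter, Fintype.sum_prod_type]
    simp
  rw [← hown, farDeliveries, Set.ncard_eq_toFinset_card', Set.toFinset_ofPred,
    ← card_filter_add_card_filter_not (fun p : Fin m × Fin n => p.2 ∈ a p.1),
    filter_filter, filter_filter]
  congr 2
  ext p
  simp only [mem_filter, mem_univ, true_and, and_iff_right_iff_imp]
  exact canReach_of_mem

theorem two_le_card_farDeliveries_filter_insert_eq (hm : m = n.choose 2)
    (hinj : Function.Injective a) (hcard : ∀ k, #(a k) = 2) {s : Finset (Fin n)} (hs : #s = 3) :
    2 ≤ #{p ∈ farDeliveries a | insert p.2 (a p.1) = s} := by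
  set K : Finset (Fin m) := {k | a k ⊆ s}
  have hK : #K = 3 := by
    rw [card_filter_subset_of_injective hinj hcard (by simp [hm]) s, hs]
    rfl
  have hKne : K.Nonempty := card_pos.1 (by omega)
  set M := K.max' hKne
  have hMK : M ∈ K := K.max'_mem hKne
  have hMs : a M ⊆ s := (mem_filter.1 hMK).2
  calc 2 = #(K.erase M) := by rw [card_erase_of_mem hMK, hK]
    _ ≤ _ := card_le_card_of_surjOn Prod.fst ?_
  intro k hk
  obtain ⟨hkM, hkK⟩ := mem_erase.1 hk
  have hks : a k ⊆ s := (mem_filter.1 hkK).2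
  obtain ⟨x, hx⟩ := card_eq_one.1 (by rw [card_sdiff_of_subset hks, hs, hcard] : #(s \ a k) = 1)
  obtain ⟨hxs, hxk⟩ := mem_sdiff.1 (hx ▸ mem_singleton_self x)
  have hreach : canReach a k x :=
    canReach_of_lt (lt_of_le_of_ne (K.le_max' k hkK) hkM)
      (inter_nonempty_of_card_two_of_subset_card_three hs hks hMs (hcard k) (hcard M))
      (mem_of_card_two_of_subset_card_three hs hks hMs (hcard k) (hcard M) (hinj.ne hkM) hxs hxk)
  refine ⟨(k, x), mem_filter.2 ⟨?_, ?_⟩, rfl⟩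
  · simpa [farDeliveries] using ⟨hreach, hxk⟩
  · rw [insert_eq, ← hx, sdiff_union_of_subset hks]

theorem two_mul_choose_three_le_card_farDeliveries (hm : m = n.choose 2)
    (hinj : Function.Injective a) (hcard : ∀ k, #(a k) = 2) :
    2 * n.choose 3 ≤ #(farDeliveries a) := by
  have hmaps : ∀ p ∈ farDeliveries a, insert p.2 (a p.1) ∈ powersetCard 3 univ := by
    intro p hp
    simp only [farDeliveries, mem_filter] at hp
    rw [mem_powersetCard, card_insert_of_notMem hp.2.2, hcard]
    exact ⟨subset_univ _, rfl⟩
  simpa using mul_card_image_le_card_of_maps_to hmaps 2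
    fun s hs => two_le_card_farDeliveries_filter_insert_eq hm hinj hcard (mem_powersetCard.1 hs).2

end Reach

/-- For any sequence of `C(n,2)` distinct unordered pairs from `{1,...,n}` (an RCMSN),
the total number of deliveries is at least `2*C(n,2) + 2*C(n,3)`. -/
theorem stmt_1 (n m : ℕ) (hm : m = n.choose 2) (a : Fin m → Finset (Fin n))
    (hinj : Function.Injective a) (hcard : ∀ k, (a k).card = 2) :
    2 * n.choose 2 + 2 * n.choose 3 ≤
      {p : Fin m × Fin n | canReach a p.1 p.2}.ncard := by
  have hown : ∑ k, #(a k) = 2 * n.choose 2 := by simp [hcard, hm, mul_comm]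
  rw [ncard_canReach_eq, hown]
  exact Nat.add_le_add_left (two_mul_choose_three_le_card_farDeliveries hm hinj hcard) _
end

section
/- For any sequence of C(n,2) distinct unordered pairs from {1,...,n}, the total number of deliveries is at most (n-1)(n^2-n+2)/2; equivalently, the capacity of an RCMSN is at most 1 - 1/n + 2/n². -/
open Finset

private lemma chain_le {m n : ℕ} {a : Fin m → Finset (Fin n)} {k k' : Fin m}
    (h : Relation.ReflTransGen (fun i j : Fin m => i < j ∧ (a i ∩ a j).Nonempty) k k') :
    k ≤ k' := by
  induction h with
  | refl => exact le_refl k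
  | tail _ h2 ih => exact ih.trans h2.1.le

private lemma biUnion_bound {m n : ℕ} (e : Fin m → Finset (Fin n)) (he : ∀ i, (e i).card = 2)
    (k : Fin m) : ∀ T : Finset (Fin m), k ∈ T → (∀ j ∈ T, k ≤ j) →
    (∀ j ∈ T, j ≠ k → ∃ i ∈ T, i < j ∧ (e i ∩ e j).Nonempty) →
    (T.biUnion e).card ≤ T.card + 1 := by
  intro T
  induction T using Finset.strongInductionOn with
  | _ T ih =>
  intro hk hge hstep
  have hne : T.Nonempty := ⟨k, hk⟩
  by_cases htk : T.max' hne = k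
  · have hTk : T = {k} := by
      apply Finset.eq_singleton_iff_unique_mem.mpr
      exact ⟨hk, fun j hj => le_antisymm (htk ▸ T.le_max' j hj) (hge j hj)⟩
    rw [hTk]
    simp [he k]
  · set t := T.max' hne with ht
    have htT : t ∈ T := T.max'_mem hne
    set T' := T.erase t with hT'
    have hsub : T' ⊂ T := Finset.erase_ssubset htT
    have hkT' : k ∈ T' := Finset.mem_erase.mpr ⟨fun h => htk h.symm, hk⟩
    have hstep' : ∀ j ∈ T', j ≠ k → ∃ i ∈ T', i < j ∧ (e i ∩ e j).Nonempty := by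
      intro j hj hjk
      obtain ⟨i, hiT, hij, hint⟩ := hstep j (Finset.mem_of_mem_erase hj) hjk
      have hjt : j < t := lt_of_le_of_ne (T.le_max' j (Finset.mem_of_mem_erase hj))
        (Finset.mem_erase.mp hj).1
      exact ⟨i, Finset.mem_erase.mpr ⟨ne_of_lt (hij.trans hjt), hiT⟩, hij, hint⟩
    have ihT' := ih T' hsub hkT' (fun j hj => hge j (Finset.mem_of_mem_erase hj)) hstep'
    obtain ⟨i, hiT, hit, x, hx⟩ := hstep t htT htk
    have hiT' : i ∈ T' := Finset.mem_erase.mpr ⟨ne_of_lt hit, hiT⟩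
    have hxU : x ∈ T'.biUnion e := Finset.mem_biUnion.mpr ⟨i, hiT', (Finset.mem_inter.mp hx).1⟩
    have hxt : x ∈ e t := (Finset.mem_inter.mp hx).2
    have hins : T = insert t T' := (Finset.insert_erase htT).symm
    have hcard1 : (e t \ T'.biUnion e).card ≤ 1 := by
      have hsub2 : e t \ T'.biUnion e ⊆ (e t).erase x := by
        intro y hy
        rw [Finset.mem_sdiff] at hy
        exact Finset.mem_erase.mpr ⟨fun h => hy.2 (h ▸ hxU), hy.1⟩
      calc (e t \ T'.biUnion e).card ≤ ((e t).erase x).card := Finset.card_le_card hsub2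
        _ = (e t).card - 1 := Finset.card_erase_of_mem hxt
        _ = 1 := by rw [he t]
    have hTcard : T'.card = T.card - 1 := Finset.card_erase_of_mem htT
    have hTpos : 1 ≤ T.card := Finset.card_pos.mpr hne
    calc (T.biUnion e).card = ((insert t T').biUnion e).card := by rw [← hins]
      _ = (e t ∪ T'.biUnion e).card := by rw [Finset.biUnion_insert]
      _ = (e t \ T'.biUnion e).card + (T'.biUnion e).card := (Finset.card_sdiff_add_card _ _).symm
      _ ≤ 1 + (T'.card + 1) := by omega
      _ ≤ T.card + 1 := by omega
private lemma gauss2 (k : ℕ) : 2 * ∑ i ∈ Finset.range k, (i + 2) = k * (k + 3) := by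
  induction k with
  | zero => simp
  | succ k ih => rw [Finset.sum_range_succ, mul_add, ih]; ring

private lemma sum_min_bound (n : ℕ) (hn : 2 ≤ n) :
    2 * ∑ i ∈ Finset.range (n.choose 2), min n (i + 2) ≤ (n - 1) * (n ^ 2 - n + 2) := by
  obtain ⟨k, rfl⟩ : ∃ k, n = k + 2 := ⟨n - 2, by omega⟩
  have hm : 2 * (k + 2).choose 2 = (k + 2) * (k + 1) := by
    rw [Nat.choose_two_right]
    have hdvd : 2 ∣ (k + 2) * (k + 2 - 1) := by
      simpa [mul_comm] using (Nat.even_mul_succ_self (k + 1)).two_dvd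
    simpa using Nat.mul_div_cancel' hdvd
  generalize hmdef : (k + 2).choose 2 = m at hm ⊢
  have hmk : k ≤ m := by
    have hexp : (k + 2) * (k + 1) = k * k + 3 * k + 2 := by ring
    omega
  have hsplit : ∑ i ∈ Finset.range m, min (k + 2) (i + 2)
      = (∑ i ∈ Finset.range k, (i + 2)) + (m - k) * (k + 2) := by
    rw [Finset.range_eq_Ico, ← Finset.sum_Ico_consecutive _ (Nat.zero_le k) hmk]
    congr 1
    · rw [← Finset.range_eq_Ico]
      exact Finset.sum_congr rfl fun i hi => min_eq_right (by
        have := Finset.mem_range.mp hi; omega)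
    · rw [Finset.sum_congr rfl (fun i hi => min_eq_left (by
        have := (Finset.mem_Ico.mp hi).1; omega)),
        Finset.sum_const, Nat.card_Ico, smul_eq_mul]
  rw [hsplit]
  obtain ⟨d, rfl⟩ : ∃ d, m = k + d := ⟨m - k, by omega⟩
  have hd : k + d - k = d := by omega
  rw [hd]
  have hrhs : (k + 2) ^ 2 - (k + 2) + 2 = (k + 2) * (k + 1) + 2 := by
    have h : (k + 2) ^ 2 = (k + 2) * (k + 1) + (k + 2) := by ring
    omega
  have hrhs1 : k + 2 - 1 = k + 1 := by omega
  rw [hrhs, hrhs1]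
  apply le_of_eq
  have hg := gauss2 k
  nlinarith [hg, hm]

/-- For any RCMSN of `n ≥ 2` sensors, the total number of deliveries is at most
`(n-1)(n²-n+2)/2`; equivalently the capacity is at most `1 - 1/n + 2/n²`. -/
theorem stmt_3 (n m : ℕ) (hn : 2 ≤ n) (hm : m = n.choose 2) (a : Fin m → Finset (Fin n))
    (hinj : Function.Injective a) (hcard : ∀ k, (a k).card = 2) :
    {p : Fin m × Fin n | canReach a p.1 p.2}.ncard ≤ (n - 1) * (n ^ 2 - n + 2) / 2 ∧
    ({p : Fin m × Fin n | canReach a p.1 p.2}.ncard : ℚ) / ((n : ℚ) * (n.choose 2 : ℚ))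
      ≤ 1 - 1 / (n : ℚ) + 2 / (n : ℚ) ^ 2 := by
  classical
  have key : 2 * {p : Fin m × Fin n | canReach a p.1 p.2}.ncard ≤ (n - 1) * (n ^ 2 - n + 2) := by
    have hset : {p : Fin m × Fin n | canReach a p.1 p.2}
        = ↑(Finset.univ.filter fun p : Fin m × Fin n => canReach a p.1 p.2) := by
      ext p; simp
    rw [hset, Set.ncard_coe_finset]
    set s := Finset.univ.filter fun p : Fin m × Fin n => canReach a p.1 p.2 with hs
    rw [Finset.card_eq_sum_card_fiberwise (f := Prod.fst) (t := Finset.univ)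
      (fun x _ => Finset.mem_univ _)]
    have hfib : ∀ k : Fin m, (s.filter fun p => p.1 = k).card ≤ min n (m - ↑k + 1) := by
      intro k
      set R : Finset (Fin n) := Finset.univ.filter (canReach a k) with hR
      have hfe : s.filter (fun p => p.1 = k) = {k} ×ˢ R := by
        ext ⟨p1, p2⟩
        simp only [hs, hR, Finset.mem_filter, Finset.mem_univ, true_and,
          Finset.mem_product, Finset.mem_singleton]
        constructor
        · rintro ⟨h1, rfl⟩; exact ⟨rfl, h1⟩
        · rintro ⟨rfl, h2⟩; exact ⟨h2, rfl⟩
      rw [hfe, Finset.card_product, Finset.card_singleton, one_mul]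
      set T : Finset (Fin m) := Finset.univ.filter
        (Relation.ReflTransGen (fun i j : Fin m => i < j ∧ (a i ∩ a j).Nonempty) k) with hT
      have hkT : k ∈ T := Finset.mem_filter.mpr ⟨Finset.mem_univ _, Relation.ReflTransGen.refl⟩
      have hRsub : R ⊆ T.biUnion a := by
        intro x hx
        obtain ⟨k', hchain, hmem⟩ := (Finset.mem_filter.mp hx).2
        exact Finset.mem_biUnion.mpr ⟨k',
          Finset.mem_filter.mpr ⟨Finset.mem_univ _, hchain⟩, hmem⟩
      have hbound := biUnion_bound a hcard k T hkT
        (fun j hj => chain_le (Finset.mem_filter.mp hj).2)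
        (by
          intro j hj hjk
          rcases (Finset.mem_filter.mp hj).2.cases_tail with h | ⟨c, hc, hcj⟩
          · exact absurd h hjk
          · exact ⟨c, Finset.mem_filter.mpr ⟨Finset.mem_univ _, hc⟩, hcj.1, hcj.2⟩)
      have hTcard : T.card ≤ m - ↑k := by
        have hsub : T ⊆ Finset.Ici k :=
          fun j hj => Finset.mem_Ici.mpr (chain_le (Finset.mem_filter.mp hj).2)
        calc T.card ≤ (Finset.Ici k).card := Finset.card_le_card hsub
          _ = m - ↑k := Fin.card_Ici k
      refine le_min ?_ ?_
      · calc R.card ≤ Fintype.card (Fin n) := Finset.card_le_univ R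
          _ = n := Fintype.card_fin n
      · calc R.card ≤ (T.biUnion a).card := Finset.card_le_card hRsub
          _ ≤ T.card + 1 := hbound
          _ ≤ m - ↑k + 1 := by omega
    calc 2 * ∑ k : Fin m, (s.filter fun p => p.1 = k).card
        ≤ 2 * ∑ k : Fin m, min n (m - ↑k + 1) :=
          Nat.mul_le_mul_left 2 (Finset.sum_le_sum fun k _ => hfib k)
      _ = 2 * ∑ i ∈ Finset.range m, min n (m - i + 1) := by
          rw [Fin.sum_univ_eq_sum_range (fun i => min n (m - i + 1)) m]
      _ = 2 * ∑ i ∈ Finset.range m, min n (i + 2) := by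
          rw [← Finset.sum_range_reflect (fun j => min n (j + 2)) m]
          congr 1
          refine Finset.sum_congr rfl fun i hi => ?_
          have := Finset.mem_range.mp hi
          congr 1
          omega
      _ ≤ (n - 1) * (n ^ 2 - n + 2) := by rw [hm]; exact sum_min_bound n hn
  constructor
  · rw [Nat.le_div_iff_mul_le (by norm_num : 0 < 2)]
    linarith [key]
  · have hn2 : (2 : ℚ) ≤ (n : ℚ) := by exact_mod_cast hn
    have hQ : 2 * ({p : Fin m × Fin n | canReach a p.1 p.2}.ncard : ℚ)
        ≤ ((n : ℚ) - 1) * ((n : ℚ) ^ 2 - (n : ℚ) + 2) := by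
      have h1 : (1 : ℕ) ≤ n := by omega
      have h2 : n ≤ n ^ 2 := by nlinarith
      exact_mod_cast (by push_cast [Nat.cast_sub h1, Nat.cast_sub h2] at key ⊢; exact_mod_cast key :
        2 * ({p : Fin m × Fin n | canReach a p.1 p.2}.ncard : ℚ)
          ≤ ((n : ℚ) - 1) * ((n : ℚ) ^ 2 - (n : ℚ) + 2))
    rw [Nat.cast_choose_two]
    have hden : 0 < (n : ℚ) * ((n : ℚ) * ((n : ℚ) - 1) / 2) := by
      have h1 : (0 : ℚ) < (n : ℚ) - 1 := by linarith
      have h0 : (0 : ℚ) < (n : ℚ) := by linarith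
      positivity
    rw [div_le_iff₀ hden]
    have hRD : (1 - 1 / (n : ℚ) + 2 / (n : ℚ) ^ 2) * ((n : ℚ) * ((n : ℚ) * ((n : ℚ) - 1) / 2))
        = ((n : ℚ) - 1) * ((n : ℚ) ^ 2 - (n : ℚ) + 2) / 2 := by
      have h0 : (n : ℚ) ≠ 0 := by linarith
      field_simp
    rw [hRD]
    linarith [hQ]
end

section
/- The integral 2 ∫₀¹ ∫₀¹ ∫_a¹ ∫₀¹ ∫_{a'}¹ max{0, min{1, b + (b'-b)(a-a'')/(a-a')}} da'' db' da' db da equals 1/6. -/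
/-!
For `a < a' ≤ a''` the integrand, as a function of `b'`, clamps to `[0, 1]` the line through
`(b, b)` of slope `t = (a'' - a) / (a' - a) ≥ 1`, so its integral over `b'` is
`(1 - b) + (b - 1/2) / t`. Integrating over `a''` and `a'` turns `1 / t` into a logarithmic term,
but its coefficient `b - 1/2` has mean zero in `b`; only `(1 - b)(1 - a)² / 2` survives, whose
integral over `b` is `(1 - a)² / 4`, and `2 ∫₀¹ (1 - a)² / 4 da = 1/6`.
-/

open intervalIntegral MeasureTheory Real Set

lemma integral_max_zero_min_one {p q : ℝ} (hp : p ≤ 0) (hq : 1 ≤ q) :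
    ∫ y in p..q, max 0 (min 1 y) = q - 1 / 2 := by
  have hint : ∀ u v : ℝ, IntervalIntegrable (fun y : ℝ => max 0 (min 1 y)) volume u v :=
    fun u v => (continuous_const.max (continuous_const.min continuous_id)).intervalIntegrable u v
  rw [← integral_add_adjacent_intervals (hint p 0) (hint 0 q),
    ← integral_add_adjacent_intervals (hint 0 1) (hint 1 q)]
  have below : ∫ y in p..0, max 0 (min 1 y) = ∫ _ in p..0, (0 : ℝ) :=
    integral_congr fun y hy => by
      rw [uIcc_of_le hp] at hy; simp [hy.2]
  have ramp : ∫ y in (0 : ℝ)..1, max 0 (min 1 y) = ∫ y in (0 : ℝ)..1, y :=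
    integral_congr fun y hy => by
      rw [uIcc_of_le zero_le_one] at hy; simp [hy.1, hy.2]
  have above : ∫ y in (1 : ℝ)..q, max 0 (min 1 y) = ∫ _ in (1 : ℝ)..q, (1 : ℝ) :=
    integral_congr fun y hy => by
      rw [uIcc_of_le hq] at hy; simp [hy.1]
  rw [below, ramp, above, intervalIntegral.integral_zero, integral_id,
    intervalIntegral.integral_const, smul_eq_mul]
  ring

lemma integral_max_zero_min_one_comp_mul_sub {t d p q : ℝ} (ht : t ≠ 0)
    (hp : t * p - d ≤ 0) (hq : 1 ≤ t * q - d) :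
    ∫ x in p..q, max 0 (min 1 (t * x - d)) = t⁻¹ * (t * q - d - 1 / 2) := by
  rw [integral_comp_mul_sub (fun y => max 0 (min 1 y)) ht, integral_max_zero_min_one hp hq,
    smul_eq_mul]

lemma integral_max_zero_min_one_add_sub_mul {b t : ℝ} (hb₀ : 0 ≤ b) (hb₁ : b ≤ 1) (ht : 1 ≤ t) :
    ∫ x in (0 : ℝ)..1, max 0 (min 1 (b + (x - b) * t)) = 1 - b + (b - 1 / 2) / t := by
  have ht₀ : t ≠ 0 := by positivity
  have hramp := integral_max_zero_min_one_comp_mul_sub (p := 0) (q := 1) (d := (t - 1) * b) ht₀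
    (by nlinarith) (by nlinarith)
  simp_rw [show ∀ x, b + (x - b) * t = t * x - (t - 1) * b by intro x; ring]
  rw [hramp]
  field_simp
  ring

lemma intervalIntegral_swap_of_continuous {F : ℝ → ℝ → ℝ} (hF : Continuous F.uncurry)
    (a b c d : ℝ) :
    ∫ x in a..b, ∫ y in c..d, F x y = ∫ y in c..d, ∫ x in a..b, F x y :=
  intervalIntegral_intervalIntegral_swap <|
    (hF.continuousOn.integrableOn_compact (isCompact_uIcc.prod isCompact_uIcc)).mono_set
      (prod_mono uIoc_subset_uIcc uIoc_subset_uIcc)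

lemma integral_inv_sub_right {a x y : ℝ} (hx : a < x) (hy : a < y) :
    ∫ z in x..y, (z - a)⁻¹ = log (y - a) - log (x - a) := by
  rw [integral_comp_sub_right (fun z => z⁻¹), integral_inv_of_pos (sub_pos.2 hx) (sub_pos.2 hy),
    log_div (sub_pos.2 hy).ne' (sub_pos.2 hx).ne']

lemma integral_integral_max_zero_min_one {a a' b : ℝ} (ha : a < a') (ha' : a' ≤ 1)
    (hb₀ : 0 ≤ b) (hb₁ : b ≤ 1) :
    ∫ b' in (0 : ℝ)..1, ∫ a'' in a'..1, max 0 (min 1 (b + (b' - b) * (a - a'') / (a - a'))) =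
      (1 - b) * (1 - a') + (b - 1 / 2) * ((a' - a) * (log (1 - a) - log (a' - a))) := by
  rw [intervalIntegral_swap_of_continuous (by fun_prop)]
  have pivot : EqOn (fun a'' => ∫ b' in (0 : ℝ)..1,
        max 0 (min 1 (b + (b' - b) * (a - a'') / (a - a'))))
      (fun a'' => (1 - b) + (b - 1 / 2) * (a' - a) * (a'' - a)⁻¹) (uIcc a' 1) := by
    intro a'' ha''
    rw [uIcc_of_le ha'] at ha''
    have ht : 1 ≤ (a'' - a) / (a' - a) := by
      rw [one_le_div (sub_pos.2 ha)]; linarith [ha''.1]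
    have hslope : ∀ b', (b' - b) * (a - a'') / (a - a') = (b' - b) * ((a'' - a) / (a' - a)) := by
      intro b'; rw [mul_div_assoc, ← neg_div_neg_eq]; ring_nf
    simp only [hslope, integral_max_zero_min_one_add_sub_mul hb₀ hb₁ ht]
    field_simp
  have hinv : IntervalIntegrable (fun a'' => (a'' - a)⁻¹) volume a' 1 :=
    (continuousOn_inv₀.comp (continuousOn_id.sub continuousOn_const) fun z hz => by
      rw [uIcc_of_le ha'] at hz; exact (sub_pos.2 (ha.trans_le hz.1)).ne').intervalIntegrable
  rw [integral_congr pivot, integral_add intervalIntegrable_const (hinv.const_mul _),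
    intervalIntegral.integral_const_mul, integral_inv_sub_right ha (ha.trans_le ha'),
    intervalIntegral.integral_const, smul_eq_mul]
  ring

lemma continuous_mul_log_sub_log (a c : ℝ) :
    Continuous fun x : ℝ => (x - a) * (log c - log (x - a)) := by
  simp_rw [mul_sub]
  exact ((continuous_sub_right a).mul continuous_const).sub
    (continuous_mul_log.comp (continuous_sub_right a))

lemma integral_integral_integral_max_zero_min_one {a b : ℝ} (ha : a ≤ 1) (hb₀ : 0 ≤ b)
    (hb₁ : b ≤ 1) :
    ∫ a' in a..1, ∫ b' in (0 : ℝ)..1, ∫ a'' in a'..1,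
        max 0 (min 1 (b + (b' - b) * (a - a'') / (a - a'))) =
      (1 - b) * ((1 - a) ^ 2 / 2) +
        (b - 1 / 2) * ∫ a' in a..1, (a' - a) * (log (1 - a) - log (a' - a)) := by
  have inner : ∀ᵐ a' ∂volume, a' ∈ uIoc a 1 →
      ∫ b' in (0 : ℝ)..1, ∫ a'' in a'..1, max 0 (min 1 (b + (b' - b) * (a - a'') / (a - a'))) =
        (1 - b) * (1 - a') + (b - 1 / 2) * ((a' - a) * (log (1 - a) - log (a' - a))) :=
    ae_of_all _ fun a' ha' => by
      rw [uIoc_of_le ha] at ha'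
      exact integral_integral_max_zero_min_one ha'.1 ha'.2 hb₀ hb₁
  rw [integral_congr_ae inner, intervalIntegral.integral_add (f := fun x => (1 - b) * (1 - x))
      ((continuous_const.mul (continuous_const.sub continuous_id)).intervalIntegrable _ _)
      ((continuous_mul_log_sub_log a (1 - a)).intervalIntegrable _ _ |>.const_mul _),
    intervalIntegral.integral_const_mul, intervalIntegral.integral_const_mul,
    integral_comp_sub_left (fun x => x)]
  simp [integral_id]

lemma integral_one_sub_mul_add_sub_half_mul (A C : ℝ) :
    ∫ b in (0 : ℝ)..1, ((1 - b) * A + (b - 1 / 2) * C) = A / 2 := by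
  have hlin : ∀ b : ℝ, (1 - b) * A + (b - 1 / 2) * C = (C - A) * b + (A - C / 2) := by
    intro b; ring
  simp only [hlin]
  rw [intervalIntegral.integral_add
    ((continuous_const_mul (C - A)).intervalIntegrable _ _) intervalIntegrable_const,
    intervalIntegral.integral_const_mul, integral_id, intervalIntegral.integral_const, smul_eq_mul]
  ring

lemma integral_integral_integral_integral_max_zero_min_one {a : ℝ} (ha : a ≤ 1) :
    ∫ b in (0 : ℝ)..1, ∫ a' in a..1, ∫ b' in (0 : ℝ)..1, ∫ a'' in a'..1,
        max 0 (min 1 (b + (b' - b) * (a - a'') / (a - a'))) = (1 - a) ^ 2 / 4 := by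
  set C := ∫ a' in a..1, (a' - a) * (log (1 - a) - log (a' - a))
  rw [integral_congr (g := fun b => (1 - b) * ((1 - a) ^ 2 / 2) + (b - 1 / 2) * C) fun b hb => ?_,
    integral_one_sub_mul_add_sub_half_mul]
  · ring
  · rw [uIcc_of_le zero_le_one] at hb
    exact integral_integral_integral_max_zero_min_one ha hb.1 hb.2

/-- The integral `2 ∫₀¹∫₀¹∫_a¹∫₀¹∫_{a'}¹ max{0, min{1, b + (b'-b)(a-a'')/(a-a')}}`
equals `1/6`. -/
theorem stmt_8 :
    2 * ∫ a in (0:ℝ)..1, ∫ b in (0:ℝ)..1, ∫ a' in a..1, ∫ b' in (0:ℝ)..1,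
        ∫ a'' in a'..1, max 0 (min 1 (b + (b' - b) * (a - a'') / (a - a')))
      = 1 / 6 := by
  rw [integral_congr (g := fun a => (1 - a) ^ 2 / 4) fun a ha => ?_]
  · norm_num [integral_comp_sub_left (fun x => x ^ 2 / 4)]
  · rw [uIcc_of_le zero_le_one] at ha
    exact integral_integral_integral_integral_max_zero_min_one ha.2
end

section
/- For each n ≥ 5, the quantity max over integers a with 1 ≤ a ≤ (n-1)/2 of f(a) = (a + (n - 2a) + 1)/n - ((n-1)/(2n)) · (n - 2a)/(a² + 2a(n - 2a)) satisfies f(a) = 1 - n^{-1/2} + (9/8) n^{-1} + O(n^{-3/2}) as n → ∞. -/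
/-- The capacity of the explicit 3-slope construction with `b = n - 2a`. -/
noncomputable def f3 (n a : ℕ) : ℝ :=
  ((a : ℝ) + ((n : ℝ) - 2 * a) + 1) / n
    - (((n : ℝ) - 1) / (2 * n)) * (((n : ℝ) - 2 * a) / ((a : ℝ) ^ 2 + 2 * a * ((n : ℝ) - 2 * a)))

private lemma keyR (A s : ℝ) (hA : 1 ≤ A) (hs : 2 ≤ s) (h5 : 5 ≤ s^2) (hA2 : 2*A ≤ s^2 - 1) :
    0 ≤ 2*s^2*(2*A-s)^2 + 160*A*s - 2*s^2 - 6*A^2 := by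
  rcases le_or_gt s A with h | h
  · nlinarith [mul_nonneg (sub_nonneg.2 h) (show (0:ℝ) ≤ 3*A - s by linarith),
      mul_nonneg (sub_nonneg.2 h) (show (0:ℝ) ≤ A + s by linarith), sq_nonneg (2*A-s)]
  · rcases le_or_gt (2*A) (s-2) with h2 | h2
    · nlinarith [mul_nonneg (show (0:ℝ) ≤ s - 2*A - 2 by linarith) (show (0:ℝ) ≤ s - 2*A + 2 by linarith),
        mul_nonneg (show (0:ℝ) ≤ s - A by linarith) (show (0:ℝ) ≤ s + A by linarith),
        mul_pos (show (0:ℝ) < A by linarith) (show (0:ℝ) < s by linarith)]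
    · have h9 : (20:ℝ) < 9*s := by nlinarith
      nlinarith [sq_nonneg (2*A-s), mul_nonneg (show (0:ℝ) ≤ s by linarith) (show (0:ℝ) ≤ 2*A - s + 2 by linarith),
        mul_nonneg (show (0:ℝ) ≤ s by linarith) (show (0:ℝ) ≤ 9*s - 20 by linarith),
        mul_nonneg (show (0:ℝ) ≤ s - A by linarith) (show (0:ℝ) ≤ s + A by linarith),
        mul_nonneg (mul_nonneg (show (0:ℝ) ≤ s by linarith) (show (0:ℝ) ≤ s by linarith)) (sq_nonneg (2*A-s))]

private lemma keyQ (A s : ℝ) (hA : 1 ≤ A) (hs : 2 ≤ s) (h5 : 5 ≤ s^2) (hA2 : 2*A ≤ s^2 - 1) :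
    0 ≤ 2*s*(2*s^2-3*A)*(2*A-s)^2 + 160*A*(2*s^2-3*A) - 2*s*(2*s^2-3*A) - s*A*(3*A-2) := by
  have hR := keyR A s hA hs h5 hA2
  have hden : (0:ℝ) ≤ 2*s^2 - 3*A := by linarith
  have h1 : 0 ≤ (2*s^2-3*A) * s * (2*s^2*(2*A-s)^2 + 160*A*s - 2*s^2 - 6*A^2) :=
    mul_nonneg (mul_nonneg hden (by linarith)) hR
  have hinner : (0:ℝ) ≤ 9*s^2*A + 2*s^2 - 18*A^2 := by
    nlinarith [mul_nonneg (show (0:ℝ) ≤ A by linarith) (show (0:ℝ) ≤ s^2 - 1 - 2*A by linarith)]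
  have h2 : 0 ≤ s*A*(9*s^2*A + 2*s^2 - 18*A^2) :=
    mul_nonneg (mul_nonneg (by linarith) (by linarith)) hinner
  have h3 : 0 ≤ s^2 * (2*s*(2*s^2-3*A)*(2*A-s)^2 + 160*A*(2*s^2-3*A) - 2*s*(2*s^2-3*A) - s*A*(3*A-2)) := by
    have hid : s^2 * (2*s*(2*s^2-3*A)*(2*A-s)^2 + 160*A*(2*s^2-3*A) - 2*s*(2*s^2-3*A) - s*A*(3*A-2))
        = (2*s^2-3*A) * s * (2*s^2*(2*A-s)^2 + 160*A*s - 2*s^2 - 6*A^2)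
          + s*A*(9*s^2*A + 2*s^2 - 18*A^2) := by ring
    linarith [hid ▸ (add_nonneg h1 h2)]
  have hs2 : (0:ℝ) < s^2 := by positivity
  by_contra hcon
  push_neg at hcon
  nlinarith [mul_pos hs2 (neg_pos.2 hcon)]

private lemma keyQ2 (A s : ℝ) (hA : 1 ≤ A) (hs : 2 ≤ s) (hA2 : 2*A ≤ s^2 - 1)
    (hlo : s ≤ 2*A) (hhi : 2*A ≤ s + 2) :
    0 ≤ 16*A*(2*s^2-3*A) - 2*s*(2*s^2-3*A)*(2*A-s)^2 + 2*s*(2*s^2-3*A) + s*A*(3*A-2) := by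
  have hden : (0:ℝ) ≤ 2*s^2 - 3*A := by linarith
  nlinarith [mul_nonneg (mul_nonneg (mul_nonneg hden (show (0:ℝ) ≤ 2*s by linarith))
      (show (0:ℝ) ≤ 2 - (2*A-s) by linarith)) (show (0:ℝ) ≤ 2 + (2*A-s) by linarith),
    mul_nonneg hden (show (0:ℝ) ≤ 16*A - 6*s by linarith),
    mul_nonneg (mul_nonneg (show (0:ℝ) ≤ s by linarith) (show (0:ℝ) ≤ A by linarith))
      (show (0:ℝ) ≤ 3*A - 2 by linarith)]

private lemma basic_facts (n : ℕ) (hn : 5 ≤ n) :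
    (n:ℝ) = (Real.sqrt n)^2 ∧ 2 ≤ Real.sqrt n ∧ 5 ≤ (Real.sqrt n)^2 := by
  have h0 : (0:ℝ) ≤ (n:ℝ) := by positivity
  have hN : (n:ℝ) = (Real.sqrt n)^2 := (Real.sq_sqrt h0).symm
  have h5 : (5:ℝ) ≤ (Real.sqrt n)^2 := by
    rw [← hN]; exact_mod_cast hn
  have hsnn : 0 ≤ Real.sqrt (n:ℝ) := Real.sqrt_nonneg _
  refine ⟨hN, by nlinarith, h5⟩

private lemma f3_upper (n a : ℕ) (hn : 5 ≤ n) (ha : 1 ≤ a) (ha2 : 2 * a ≤ n - 1) :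
    f3 n a ≤ 1 - (Real.sqrt n)⁻¹ + 9/(8*n) + 20/(n * Real.sqrt n) := by
  obtain ⟨hN, hs, h5⟩ := basic_facts n hn
  set s := Real.sqrt (n:ℝ) with hsdef
  have hA : (1:ℝ) ≤ (a:ℝ) := by exact_mod_cast ha
  have hA2 : 2*(a:ℝ) ≤ (n:ℝ) - 1 := by
    have : 2*a + 1 ≤ n := by omega
    have := (Nat.cast_le (α := ℝ)).2 this
    push_cast at this; linarith
  have hA2' : 2*(a:ℝ) ≤ s^2 - 1 := by rw [← hN]; exact hA2
  have key := keyQ (a:ℝ) s hA hs h5 hA2'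
  have hdpos : (0:ℝ) < 2*s^2 - 3*(a:ℝ) := by linarith
  have hApos : (0:ℝ) < (a:ℝ) := by linarith
  have hspos : (0:ℝ) < s := by linarith
  have hDpos : (0:ℝ) < 8*(a:ℝ)*(2*s^2-3*(a:ℝ))*s^3 := by positivity
  have hdenom : (0:ℝ) < (a:ℝ)^2 + 2*(a:ℝ)*(s^2 - 2*(a:ℝ)) := by nlinarith
  have hid : (1 - s⁻¹ + 9/(8*(n:ℝ)) + 20/((n:ℝ)*s) - f3 n a) * (8*(a:ℝ)*(2*s^2-3*(a:ℝ))*s^3)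
      = 2*s*(2*s^2-3*(a:ℝ))*(2*(a:ℝ)-s)^2 + 160*(a:ℝ)*(2*s^2-3*(a:ℝ))
        - 2*s*(2*s^2-3*(a:ℝ)) - s*(a:ℝ)*(3*(a:ℝ)-2) := by
    rw [f3, hN]
    have hd2 : (2*s^2-3*(a:ℝ)) ≠ 0 := hdpos.ne'
    field_simp
    linear_combination (16*s*(a:ℝ) - 8*s^3 - 16*s^3*(a:ℝ) + 8*s^5) * mul_inv_cancel₀ hd2
  have h0 : 0 ≤ (1 - s⁻¹ + 9/(8*(n:ℝ)) + 20/((n:ℝ)*s) - f3 n a) * (8*(a:ℝ)*(2*s^2-3*(a:ℝ))*s^3) := by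
    rw [hid]; exact key
  by_contra hcon
  push_neg at hcon
  nlinarith [mul_pos (show (0:ℝ) < f3 n a - (1 - s⁻¹ + 9/(8*(n:ℝ)) + 20/((n:ℝ)*s)) by linarith) hDpos]

private lemma f3_lower (n a : ℕ) (hn : 5 ≤ n) (ha : 1 ≤ a) (ha2 : 2 * a ≤ n - 1)
    (hlo : Real.sqrt n ≤ 2*(a:ℝ)) (hhi : 2*(a:ℝ) ≤ Real.sqrt n + 2) :
    1 - (Real.sqrt n)⁻¹ + 9/(8*n) - 2/(n * Real.sqrt n) ≤ f3 n a := by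
  obtain ⟨hN, hs, h5⟩ := basic_facts n hn
  set s := Real.sqrt (n:ℝ) with hsdef
  have hA : (1:ℝ) ≤ (a:ℝ) := by exact_mod_cast ha
  have hA2 : 2*(a:ℝ) ≤ (n:ℝ) - 1 := by
    have : 2*a + 1 ≤ n := by omega
    have := (Nat.cast_le (α := ℝ)).2 this
    push_cast at this; linarith
  have hA2' : 2*(a:ℝ) ≤ s^2 - 1 := by rw [← hN]; exact hA2
  have key := keyQ2 (a:ℝ) s hA hs hA2' hlo hhi
  have hdpos : (0:ℝ) < 2*s^2 - 3*(a:ℝ) := by linarith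
  have hApos : (0:ℝ) < (a:ℝ) := by linarith
  have hspos : (0:ℝ) < s := by linarith
  have hDpos : (0:ℝ) < 8*(a:ℝ)*(2*s^2-3*(a:ℝ))*s^3 := by positivity
  have hdenom : (0:ℝ) < (a:ℝ)^2 + 2*(a:ℝ)*(s^2 - 2*(a:ℝ)) := by nlinarith
  have hid : (f3 n a - (1 - s⁻¹ + 9/(8*(n:ℝ)) - 2/((n:ℝ)*s))) * (8*(a:ℝ)*(2*s^2-3*(a:ℝ))*s^3)
      = 16*(a:ℝ)*(2*s^2-3*(a:ℝ)) - 2*s*(2*s^2-3*(a:ℝ))*(2*(a:ℝ)-s)^2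
        + 2*s*(2*s^2-3*(a:ℝ)) + s*(a:ℝ)*(3*(a:ℝ)-2) := by
    rw [f3, hN]
    have hd2 : (2*s^2-3*(a:ℝ)) ≠ 0 := hdpos.ne'
    field_simp
    linear_combination (-(16*s*(a:ℝ) - 8*s^3 - 16*s^3*(a:ℝ) + 8*s^5)) * mul_inv_cancel₀ hd2
  have h0 : 0 ≤ (f3 n a - (1 - s⁻¹ + 9/(8*(n:ℝ)) - 2/((n:ℝ)*s))) * (8*(a:ℝ)*(2*s^2-3*(a:ℝ))*s^3) := by
    rw [hid]; exact key
  by_contra hcon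
  push_neg at hcon
  nlinarith [mul_pos (show (0:ℝ) < (1 - s⁻¹ + 9/(8*(n:ℝ)) - 2/((n:ℝ)*s)) - f3 n a by linarith) hDpos]

/-- properties of the chosen near-optimal `a` -/
private lemma astar_props (n : ℕ) (hn : 5 ≤ n) :
    ∃ a : ℕ, 1 ≤ a ∧ 2 * a ≤ n - 1 ∧ Real.sqrt n ≤ 2*(a:ℝ) ∧ 2*(a:ℝ) ≤ Real.sqrt n + 2 := by
  set s := Real.sqrt (n:ℝ) with hsdef
  have h0 : (0:ℝ) ≤ (n:ℝ) := by positivity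
  have hN : (n:ℝ) = s^2 := (Real.sq_sqrt h0).symm
  have h5 : (5:ℝ) ≤ s^2 := by rw [← hN]; exact_mod_cast hn
  have hsnn : 0 ≤ s := Real.sqrt_nonneg _
  have hs : 2 ≤ s := by nlinarith
  refine ⟨⌈s/2⌉₊, ?_, ?_, ?_, ?_⟩
  · rw [Nat.one_le_ceil_iff]; linarith
  · have hle : (⌈s/2⌉₊ : ℝ) < s/2 + 1 := Nat.ceil_lt_add_one (by linarith)
    have hsn : s + 2 < (n:ℝ) := by nlinarith
    have : (2 * ⌈s/2⌉₊ : ℝ) < (n:ℝ) := by push_cast; linarith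
    have h2 : 2 * ⌈s/2⌉₊ < n := by exact_mod_cast this
    omega
  · have := Nat.le_ceil (s/2); linarith
  · have hle : (⌈s/2⌉₊ : ℝ) < s/2 + 1 := Nat.ceil_lt_add_one (by linarith)
    linarith

/-- For `n ≥ 5` the maximum of `f3 n a` over integers `1 ≤ a ≤ (n-1)/2` is
`1 - n^{-1/2} + (9/8)n^{-1} + O(n^{-3/2})`. -/
theorem stmt_15 :
    ∃ C : ℝ, 0 < C ∧ ∀ n : ℕ, 5 ≤ n → ∃ M : ℝ,
      IsGreatest {x : ℝ | ∃ a : ℕ, 1 ≤ a ∧ 2 * a ≤ n - 1 ∧ x = f3 n a} M ∧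
      |M - (1 - ((n : ℝ)) ^ (-(1/2 : ℝ)) + (9/8) * ((n : ℝ))⁻¹)| ≤ C * ((n : ℝ)) ^ (-(3/2 : ℝ)) := by
  refine ⟨20, by norm_num, fun n hn => ?_⟩
  obtain ⟨a₀, ha₀1, ha₀2, ha₀lo, ha₀hi⟩ := astar_props n hn
  -- membership in the set ↔ membership in the Finset image
  have hiff : ∀ a : ℕ, (1 ≤ a ∧ 2 * a ≤ n - 1) ↔ a ∈ Finset.Icc 1 ((n-1)/2) := by
    intro a
    rw [Finset.mem_Icc]
    constructor
    · rintro ⟨h1, h2⟩; exact ⟨h1, by omega⟩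
    · rintro ⟨h1, h2⟩; exact ⟨h1, by omega⟩
  set T : Finset ℝ := (Finset.Icc 1 ((n-1)/2)).image (fun a => f3 n a) with hT
  have hTne : T.Nonempty := ⟨f3 n a₀, Finset.mem_image_of_mem _ ((hiff a₀).1 ⟨ha₀1, ha₀2⟩)⟩
  refine ⟨T.max' hTne, ⟨?_, ?_⟩, ?_⟩
  · -- max' ∈ S
    obtain ⟨a, haM, haE⟩ := Finset.mem_image.1 (T.max'_mem hTne)
    exact ⟨a, ((hiff a).2 haM).1, ((hiff a).2 haM).2, haE.symm⟩
  · -- upper bound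
    rintro x ⟨a, h1, h2, rfl⟩
    exact T.le_max' _ (Finset.mem_image_of_mem _ ((hiff a).1 ⟨h1, h2⟩))
  · -- the estimate
    set s := Real.sqrt (n:ℝ) with hsdef
    have h0 : (0:ℝ) < (n:ℝ) := by positivity
    have hspos : (0:ℝ) < s := Real.sqrt_pos.2 h0
    have hr12 : ((n : ℝ)) ^ (-(1/2 : ℝ)) = s⁻¹ := by
      rw [Real.rpow_neg (le_of_lt h0), hsdef, Real.sqrt_eq_rpow]
    have hr32 : ((n : ℝ)) ^ (-(3/2 : ℝ)) = ((n:ℝ) * s)⁻¹ := by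
      rw [show (-(3/2 : ℝ)) = (-1) + (-(1/2)) by norm_num, Real.rpow_add h0,
        Real.rpow_neg_one, hr12, mul_inv]
    have hub : T.max' hTne ≤ 1 - s⁻¹ + 9/(8*n) + 20/(n * s) := by
      obtain ⟨a, haM, haE⟩ := Finset.mem_image.1 (T.max'_mem hTne)
      rw [← haE]
      exact f3_upper n a hn ((hiff a).2 haM).1 ((hiff a).2 haM).2
    have hlb : 1 - s⁻¹ + 9/(8*n) - 2/(n * s) ≤ T.max' hTne := by
      refine le_trans (f3_lower n a₀ hn ha₀1 ha₀2 ha₀lo ha₀hi) ?_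
      exact T.le_max' _ (Finset.mem_image_of_mem _ ((hiff a₀).1 ⟨ha₀1, ha₀2⟩))
    rw [hr12, hr32, abs_le]
    have hns : (0:ℝ) < (n:ℝ) * s := by positivity
    constructor
    · have h1 : (9:ℝ)/8 * (n:ℝ)⁻¹ = 9/(8*n) := by ring
      rw [h1]
      have : (2:ℝ)/(n*s) ≤ 20 * ((n:ℝ)*s)⁻¹ := by
        rw [div_eq_mul_inv]
        nlinarith [inv_pos.2 hns]
      linarith
    · have h1 : (9:ℝ)/8 * (n:ℝ)⁻¹ = 9/(8*n) := by ring
      rw [h1]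
      have : (20:ℝ)/(n*s) = 20 * ((n:ℝ)*s)⁻¹ := by rw [div_eq_mul_inv]
      linarith
end

section
/- In a geometric mobile sensor network given by n lines labeled so that line k is kx + (n+1-k)y = k(n+1-k) for 1 ≤ k ≤ n, if max{i,j} < k, then the packet {i,j} cannot reach sensor k; consequently the total number of deliveries is at most Σ_{k=1}^n k(k-1), giving capacity at most 2(n+1)/(3n). -/
/-! The intersection of lines `i` and `j` has x-coordinate `(n+1-i)(n+1-j)/(n+1)`. Consecutive
packets of a chain share a line `c ≤ n`, and for fixed `c` this coordinate decreases in the other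
line, so moving right along line `c` can only replace the other line by a smaller one. Hence the
larger label of a packet never increases along a chain, and `{i,j}` reaches only sensors
`k ≤ max i j`. Counting triples `i < j`, `k ≤ j` gives `Σ k(k-1) = (n-1)n(n+1)/3` deliveries. -/

namespace Stmt19

/-- The x-coordinate of the intersection of lines `i` and `j`
in the family `k·x + (n+1-k)·y = k(n+1-k)`, `1 ≤ k ≤ n`. -/
noncomputable def xc (n i j : ℕ) : ℝ :=
  (((n : ℝ) + 1 - i) * ((n : ℝ) + 1 - j)) / ((n : ℝ) + 1)

/-- One step of a delivery chain: move from packet `p` to a valid packet `q`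
sharing a sensor with `p`, whose intersection has an x-coordinate at least that of `p`. -/
def step (n : ℕ) (p q : ℕ × ℕ) : Prop :=
  (1 ≤ q.1 ∧ q.1 ≤ n ∧ 1 ≤ q.2 ∧ q.2 ≤ n ∧ q.1 ≠ q.2) ∧
  (p.1 = q.1 ∨ p.1 = q.2 ∨ p.2 = q.1 ∨ p.2 = q.2) ∧
  xc n p.1 p.2 ≤ xc n q.1 q.2

/-- Packet `{i,j}` can reach sensor `x` in the GMSN given by the lines
`k·x + (n+1-k)·y = k(n+1-k)`. -/
def canReach (n i j x : ℕ) : Prop :=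
  ∃ q : ℕ × ℕ, Relation.ReflTransGen (step n) (i, j) q ∧ (x = q.1 ∨ x = q.2)

open Finset

lemma xc_comm (n i j : ℕ) : xc n i j = xc n j i := by
  rw [xc, xc, mul_comm]

lemma le_of_xc_le_xc {n a b c : ℕ} (hc : c ≤ n) (h : xc n a c ≤ xc n b c) : b ≤ a := by
  have hc' : (c : ℝ) < n + 1 := by exact_mod_cast Nat.lt_succ_of_le hc
  rw [xc, xc, div_le_div_iff_of_pos_right (by positivity),
    mul_le_mul_iff_left₀ (by linarith)] at h
  exact_mod_cast (show (b : ℝ) ≤ a by linarith)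

lemma max_le_max_of_step {n : ℕ} {p q : ℕ × ℕ} (h : step n p q) :
    max q.1 q.2 ≤ max p.1 p.2 := by
  obtain ⟨⟨-, hq₁, -, hq₂, -⟩, hshare, hx⟩ := h
  obtain ⟨a, b⟩ := p
  obtain ⟨c, d⟩ := q
  dsimp only at *
  rcases hshare with h | h | h | h <;> rw [h] at hx
  · rw [xc_comm n c b, xc_comm n c d] at hx
    have := le_of_xc_le_xc hq₁ hx; omega
  · rw [xc_comm n d b] at hx
    have := le_of_xc_le_xc hq₂ hx; omega
  · rw [xc_comm n c d] at hx
    have := le_of_xc_le_xc hq₁ hx; omega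
  · have := le_of_xc_le_xc hq₂ hx; omega

lemma max_le_max_of_reflTransGen {n : ℕ} {p q : ℕ × ℕ}
    (h : Relation.ReflTransGen (step n) p q) : max q.1 q.2 ≤ max p.1 p.2 := by
  induction h with
  | refl => exact le_rfl
  | tail _ hstep ih => exact (max_le_max_of_step hstep).trans ih

lemma le_max_of_canReach {n i j k : ℕ} (h : canReach n i j k) : k ≤ max i j := by
  obtain ⟨q, hq, rfl | rfl⟩ := h
  · exact (le_max_left _ _).trans (max_le_max_of_reflTransGen hq)
  · exact (le_max_right _ _).trans (max_le_max_of_reflTransGen hq)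

lemma three_mul_sum_mul_pred_add (n : ℕ) : 3 * ∑ k ∈ Icc 1 n, k * (k - 1) + n = n ^ 3 := by
  induction n with
  | zero => simp
  | succ n ih =>
    rw [sum_Icc_succ_top (by omega), Nat.add_sub_cancel]
    nlinarith [ih]

-- At `n = 0` both sides vanish, the right one through `x / 0 = 0`.
lemma cast_sum_mul_pred_eq (n : ℕ) :
    ((∑ k ∈ Icc 1 n, k * (k - 1) : ℕ) : ℚ) =
      2 * ((n : ℚ) + 1) / (3 * n) * (n * (n.choose 2 : ℚ)) := by
  have h := three_mul_sum_mul_pred_add n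
  set s := ∑ k ∈ Icc 1 n, k * (k - 1)
  have h' : 3 * (s : ℚ) + n = n ^ 3 := by exact_mod_cast h
  rcases eq_or_ne n 0 with rfl | hn
  · simp [s]
  rw [Nat.cast_choose_two]
  field_simp
  linear_combination h'

def deliveries (n : ℕ) : Set ((ℕ × ℕ) × ℕ) :=
  {p | 1 ≤ p.1.1 ∧ p.1.1 < p.1.2 ∧ p.1.2 ≤ n ∧ 1 ≤ p.2 ∧ p.2 ≤ n ∧ canReach n p.1.1 p.1.2 p.2}

def triplesBelowMax (n : ℕ) : Finset ((ℕ × ℕ) × ℕ) :=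
  (Icc 1 n).biUnion fun j => (Ico 1 j ×ˢ {j}) ×ˢ Icc 1 j

lemma card_triplesBelowMax (n : ℕ) : #(triplesBelowMax n) = ∑ k ∈ Icc 1 n, k * (k - 1) := by
  rw [triplesBelowMax, card_biUnion]
  · refine sum_congr rfl fun k _ => ?_
    simp [mul_comm]
  · intro j _ j' _ hne
    simp only [disjoint_left, mem_product, mem_singleton]
    intro p hp hp'
    exact hne (hp.1.2.symm.trans hp'.1.2)

lemma deliveries_subset_triplesBelowMax (n : ℕ) : deliveries n ⊆ triplesBelowMax n := by
  rintro ⟨⟨i, j⟩, k⟩ ⟨hi, hij, hj, hk, -, hreach⟩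
  have hkj : k ≤ j := (le_max_of_canReach hreach).trans_eq (max_eq_right hij.le)
  simp only [triplesBelowMax, coe_biUnion, coe_Icc, Set.mem_iUnion, mem_coe, mem_product,
    mem_Ico, mem_singleton, mem_Icc]
  exact ⟨j, ⟨by omega, hj⟩, ⟨⟨hi, hij⟩, rfl⟩, hk, hkj⟩

lemma ncard_deliveries_le (n : ℕ) : (deliveries n).ncard ≤ ∑ k ∈ Icc 1 n, k * (k - 1) := by
  rw [← card_triplesBelowMax, ← Set.ncard_coe_finset]
  exact Set.ncard_le_ncard (deliveries_subset_triplesBelowMax n)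

theorem stmt_19_general (n : ℕ) :
    (∀ i j k : ℕ, 1 ≤ i → i ≤ n → 1 ≤ j → j ≤ n → i ≠ j → k ≤ n → max i j < k →
      ¬ canReach n i j k) ∧
    {p : (ℕ × ℕ) × ℕ | 1 ≤ p.1.1 ∧ p.1.1 < p.1.2 ∧ p.1.2 ≤ n ∧ 1 ≤ p.2 ∧ p.2 ≤ n ∧
        canReach n p.1.1 p.1.2 p.2}.ncard ≤ ∑ k ∈ Finset.Icc 1 n, k * (k - 1) ∧
    (({p : (ℕ × ℕ) × ℕ | 1 ≤ p.1.1 ∧ p.1.1 < p.1.2 ∧ p.1.2 ≤ n ∧ 1 ≤ p.2 ∧ p.2 ≤ n ∧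
        canReach n p.1.1 p.1.2 p.2}.ncard : ℚ) / ((n : ℚ) * (n.choose 2 : ℚ))
      ≤ 2 * ((n : ℚ) + 1) / (3 * (n : ℚ))) := by
  refine ⟨fun i j k _ _ _ _ _ _ hlt hreach => hlt.not_ge (le_max_of_canReach hreach),
    ncard_deliveries_le n, ?_⟩
  have hcount : ((deliveries n).ncard : ℚ) ≤ ((∑ k ∈ Icc 1 n, k * (k - 1) : ℕ) : ℚ) :=
    Nat.cast_le.2 (ncard_deliveries_le n)
  exact div_le_of_le_mul₀ (by positivity) (by positivity)
    (hcount.trans (cast_sum_mul_pred_eq n).le)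

/-- In the GMSN given by the lines `k·x + (n+1-k)·y = k(n+1-k)` for `1 ≤ k ≤ n`,
if `max{i,j} < k` then packet `{i,j}` cannot reach sensor `k`; consequently the
total number of deliveries is at most `Σ_{k=1}^n k(k-1)`, and the capacity is at most
`2(n+1)/(3n)`. -/
theorem stmt_19 (n : ℕ) (hn : 2 ≤ n) :
    (∀ i j k : ℕ, 1 ≤ i → i ≤ n → 1 ≤ j → j ≤ n → i ≠ j → k ≤ n → max i j < k →
      ¬ canReach n i j k) ∧
    {p : (ℕ × ℕ) × ℕ | 1 ≤ p.1.1 ∧ p.1.1 < p.1.2 ∧ p.1.2 ≤ n ∧ 1 ≤ p.2 ∧ p.2 ≤ n ∧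
        canReach n p.1.1 p.1.2 p.2}.ncard ≤ ∑ k ∈ Finset.Icc 1 n, k * (k - 1) ∧
    (({p : (ℕ × ℕ) × ℕ | 1 ≤ p.1.1 ∧ p.1.1 < p.1.2 ∧ p.1.2 ≤ n ∧ 1 ≤ p.2 ∧ p.2 ≤ n ∧
        canReach n p.1.1 p.1.2 p.2}.ncard : ℚ) / ((n : ℚ) * (n.choose 2 : ℚ))
      ≤ 2 * ((n : ℚ) + 1) / (3 * (n : ℚ))) :=
  stmt_19_general n

end Stmt19
end
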